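/- If v ∈ C²(Ω;ℝ³) on a connected open Ω ⊆ ℝ³ satisfies that u := dev grad v lies in the cuboid shape space U_{[k]}(Ω;T) (in particular the diagonal entries u_ii are polynomials of degree ≤ k−1 in each variable), then div v is a polynomial in Q_{k-1}(Ω;ℝ), i.e., of degree ≤ k−1 in each variable. -/

import Mathlib

open MeasureTheory Matrix

noncomputable section

abbrev V3 : Type := Fin 3 → ℝ

/-- Partial derivative in the `i`-th coordinate direction. -/
def pd (i : Fin 3) (f : V3 → ℝ) (x : V3) : ℝ := fderiv ℝ f x (Pi.single i 1)

/-- Curl of a vector field on `ℝ³`. -/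
def curlVec (v : V3 → V3) (x : V3) : V3 :=
  ![pd 1 (fun y => v y 2) x - pd 2 (fun y => v y 1) x,
    pd 2 (fun y => v y 0) x - pd 0 (fun y => v y 2) x,
    pd 0 (fun y => v y 1) x - pd 1 (fun y => v y 0) x]

/-- Row-wise curl of a matrix field. -/
def rowCurl (u : V3 → Matrix (Fin 3) (Fin 3) ℝ) (x : V3) : Matrix (Fin 3) (Fin 3) ℝ :=
  Matrix.of fun i j => curlVec (fun y => u y i) x j

/-- Column-wise divergence of a matrix field: `(div* u)_j = Σ_i ∂_i u_{ij}`. -/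
def divStar (u : V3 → Matrix (Fin 3) (Fin 3) ℝ) (x : V3) : V3 :=
  fun j => ∑ i, pd i (fun y => u y i j) x

/-- Row-wise divergence of a matrix field: `(div u)_i = Σ_j ∂_j u_{ij}`. -/
def rowDiv (u : V3 → Matrix (Fin 3) (Fin 3) ℝ) (x : V3) : V3 :=
  fun i => ∑ j, pd j (fun y => u y i j) x

/-- Symmetric part of a matrix. -/
def symM (A : Matrix (Fin 3) (Fin 3) ℝ) : Matrix (Fin 3) (Fin 3) ℝ :=
  (1/2 : ℝ) • (A + Aᵀ)

/-- The skew-symmetric matrix `mspn v` with `(mspn v) w = v × w`. -/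
def mspn (v : V3) : Matrix (Fin 3) (Fin 3) ℝ :=
  !![0, -v 2, v 1; v 2, 0, -v 0; -v 1, v 0, 0]

/-- Cross product on `ℝ³`. -/
def cross (a b : V3) : V3 :=
  ![a 1 * b 2 - a 2 * b 1, a 2 * b 0 - a 0 * b 2, a 0 * b 1 - a 1 * b 0]

/-- Row-wise gradient (Jacobian) of a vector field: `(grad v)_{ij} = ∂_j v_i`. -/
def gradM (v : V3 → V3) (x : V3) : Matrix (Fin 3) (Fin 3) ℝ :=
  Matrix.of fun i j => pd j (fun y => v y i) x

/-- Deviatoric (traceless) part of a matrix. -/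
def devM (A : Matrix (Fin 3) (Fin 3) ℝ) : Matrix (Fin 3) (Fin 3) ℝ :=
  A - (Matrix.trace A / 3) • (1 : Matrix (Fin 3) (Fin 3) ℝ)

/-- Divergence of a vector field. -/
def divVec (v : V3 → V3) (x : V3) : ℝ := ∑ i, pd i (fun y => v y i) x

/-- Gradient of a scalar field. -/
def gradVec (f : V3 → ℝ) (x : V3) : V3 := fun i => pd i f x

section PolyCalc
open MvPolynomial


abbrev P3 := MvPolynomial (Fin 3) ℝ

def pderivL (i : Fin 3) : P3 →ₗ[ℝ] P3 := (pderiv i : Derivation ℝ P3 P3)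

lemma pderivL_apply (i : Fin 3) (p : P3) : pderivL i p = pderiv i p := rfl

/-- Formal antiderivative in variable `i` (no constant term). -/
def intX (i : Fin 3) : P3 →ₗ[ℝ] P3 :=
  (MvPolynomial.basisMonomials (Fin 3) ℝ).constr ℝ
    (fun m => monomial (m + Finsupp.single i 1) ((m i + 1 : ℝ)⁻¹))

/-- Substitution of `0` for variable `i` (kills monomials containing `X i`). -/
def zeroX (i : Fin 3) : P3 →ₗ[ℝ] P3 :=
  (MvPolynomial.basisMonomials (Fin 3) ℝ).constr ℝ
    (fun m => if m i = 0 then monomial m 1 else 0)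

lemma intX_monomial (i : Fin 3) (m : Fin 3 →₀ ℕ) (c : ℝ) :
    intX i (monomial m c) = monomial (m + Finsupp.single i 1) (c / (m i + 1)) := by
  have h : (monomial m c : P3) = c • (MvPolynomial.basisMonomials (Fin 3) ℝ) m := by
    simp [MvPolynomial.coe_basisMonomials, MvPolynomial.smul_monomial]
  rw [h, _root_.map_smul, intX, Module.Basis.constr_basis, MvPolynomial.smul_monomial]
  rw [div_eq_mul_inv, smul_eq_mul]

lemma zeroX_monomial (i : Fin 3) (m : Fin 3 →₀ ℕ) (c : ℝ) :
    zeroX i (monomial m c) = if m i = 0 then monomial m c else 0 := by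
  have h : (monomial m c : P3) = c • (MvPolynomial.basisMonomials (Fin 3) ℝ) m := by
    simp [MvPolynomial.coe_basisMonomials, MvPolynomial.smul_monomial]
  rw [h, _root_.map_smul, zeroX, Module.Basis.constr_basis]
  split_ifs with hm <;> simp [MvPolynomial.smul_monomial]

lemma monoLM_ext {L L' : P3 →ₗ[ℝ] P3}
    (h : ∀ m : Fin 3 →₀ ℕ, L (monomial m 1) = L' (monomial m 1)) : L = L' := by
  apply (MvPolynomial.basisMonomials (Fin 3) ℝ).ext
  intro m
  simpa [MvPolynomial.coe_basisMonomials] using h m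

lemma pderiv_intX_self (i : Fin 3) (p : P3) : pderiv i (intX i p) = p := by
  have h : pderivL i ∘ₗ intX i = LinearMap.id := by
    apply monoLM_ext
    intro m
    rw [LinearMap.comp_apply, intX_monomial, pderivL_apply, pderiv_monomial]
    have h1 : ((m + Finsupp.single i 1 : Fin 3 →₀ ℕ)) i = m i + 1 := by simp
    have h2 : m + Finsupp.single i 1 - Finsupp.single i 1 = m := by
      ext k; simp [Finsupp.tsub_apply, Finsupp.add_apply, Finsupp.single_apply]
    rw [h1, h2, LinearMap.id_apply]
    congr 1
    have : ((m i : ℝ) + 1) ≠ 0 := by positivity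
    push_cast
    field_simp
  simpa [pderivL_apply] using LinearMap.congr_fun h p

lemma intX_pderiv_self (i : Fin 3) (p : P3) :
    intX i (pderiv i p) = p - zeroX i p := by
  have h : intX i ∘ₗ pderivL i = LinearMap.id - zeroX i := by
    apply monoLM_ext
    intro m
    rw [LinearMap.comp_apply, pderivL_apply, pderiv_monomial, intX_monomial,
      LinearMap.sub_apply, LinearMap.id_apply, zeroX_monomial]
    rcases Nat.eq_zero_or_pos (m i) with hm | hm
    · simp [hm]
    · have h2 : m - Finsupp.single i 1 + Finsupp.single i 1 = m := by
        ext k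
        simp only [Finsupp.add_apply, Finsupp.tsub_apply, Finsupp.single_apply]
        rcases eq_or_ne i k with rfl | hk
        · simp; omega
        · simp [hk]
      have h3 : ((m - Finsupp.single i 1 : Fin 3 →₀ ℕ)) i = m i - 1 := by
        simp [Finsupp.tsub_apply]
      rw [h2, h3]
      have hmi : m i ≠ 0 := hm.ne'
      rw [if_neg hmi, sub_zero]
      congr 1
      have hne : ((m i : ℝ) - 1 + 1) ≠ 0 := by
        have : (1:ℝ) ≤ (m i : ℝ) := by exact_mod_cast hm
        push_cast [Nat.cast_sub hm]
        nlinarith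
      rw [Nat.cast_sub hm]
      push_cast
      field_simp
      ring
  simpa [pderivL_apply] using LinearMap.congr_fun h p

lemma pderiv_intX_comm (i j : Fin 3) (hij : j ≠ i) (p : P3) :
    pderiv j (intX i p) = intX i (pderiv j p) := by
  have h : pderivL j ∘ₗ intX i = intX i ∘ₗ pderivL j := by
    apply monoLM_ext
    intro m
    rw [LinearMap.comp_apply, LinearMap.comp_apply, intX_monomial, pderivL_apply,
      pderivL_apply, pderiv_monomial, pderiv_monomial, intX_monomial]
    have h1 : ((m + Finsupp.single i 1 : Fin 3 →₀ ℕ)) j = m j := by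
      simp [Finsupp.single_apply, hij.symm]
    have h2 : m + Finsupp.single i 1 - Finsupp.single j 1
        = m - Finsupp.single j 1 + Finsupp.single i 1 := by
      ext k
      simp only [Finsupp.add_apply, Finsupp.tsub_apply, Finsupp.single_apply]
      by_cases hk : i = k <;> by_cases hk2 : j = k <;> simp [hk, hk2] <;> omega
    have h3 : ((m - Finsupp.single j 1 : Fin 3 →₀ ℕ)) i = m i := by
      simp [Finsupp.tsub_apply, Finsupp.single_apply, hij]
    rw [h1, h2, h3]
    congr 1
    ring
  simpa [pderivL_apply] using LinearMap.congr_fun h p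

lemma pderiv_zeroX_comm (i j : Fin 3) (hij : j ≠ i) (p : P3) :
    pderiv j (zeroX i p) = zeroX i (pderiv j p) := by
  have h : pderivL j ∘ₗ zeroX i = zeroX i ∘ₗ pderivL j := by
    apply monoLM_ext
    intro m
    rw [LinearMap.comp_apply, LinearMap.comp_apply, zeroX_monomial, pderivL_apply,
      pderivL_apply, pderiv_monomial, zeroX_monomial]
    have h1 : ((m - Finsupp.single j 1 : Fin 3 →₀ ℕ)) i = m i := by
      simp [Finsupp.tsub_apply, Finsupp.single_apply, hij]
    rw [h1]
    split_ifs with hm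
    · rw [pderiv_monomial]
    · simp
  simpa [pderivL_apply] using LinearMap.congr_fun h p

lemma pderiv_zeroX_self (i : Fin 3) (p : P3) : pderiv i (zeroX i p) = 0 := by
  have h : pderivL i ∘ₗ zeroX i = 0 := by
    apply monoLM_ext
    intro m
    rw [LinearMap.comp_apply, zeroX_monomial]
    split_ifs with hm
    · rw [pderivL_apply, pderiv_monomial, hm]
      simp
    · simp
  simpa [pderivL_apply] using LinearMap.congr_fun h p

lemma intX_zeroX_comm (i j : Fin 3) (hij : i ≠ j) (p : P3) :
    intX i (zeroX j p) = zeroX j (intX i p) := by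
  have h : intX i ∘ₗ zeroX j = zeroX j ∘ₗ intX i := by
    apply monoLM_ext
    intro m
    rw [LinearMap.comp_apply, LinearMap.comp_apply, zeroX_monomial, intX_monomial,
      zeroX_monomial]
    have h1 : ((m + Finsupp.single i 1 : Fin 3 →₀ ℕ)) j = m j := by
      simp [Finsupp.single_apply, hij]
    rw [h1]
    split_ifs with hm
    · rw [intX_monomial]
    · simp
  simpa [pderivL_apply] using LinearMap.congr_fun h p



noncomputable section DegreeBounds
open Finset

lemma degreeOf_monomial_le' (i : Fin 3) (m : Fin 3 →₀ ℕ) (c : ℝ) :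
    degreeOf i (monomial m c : P3) ≤ m i := by
  rw [MvPolynomial.degreeOf_le_iff]
  intro m' hm'
  have := MvPolynomial.support_monomial_subset hm'
  simp only [Finset.mem_singleton] at this
  subst this; exact le_rfl

lemma mem_support_degreeOf (i : Fin 3) (p : P3) {m : Fin 3 →₀ ℕ} (hm : m ∈ p.support) :
    m i ≤ degreeOf i p := MvPolynomial.degreeOf_le_iff.mp le_rfl m hm

/-- Generic bound: if `L` sends each monomial `m` to a polynomial whose `i`-degree is
`≤ φ (m i)` for a monotone `φ`, then `degreeOf i (L p) ≤ φ (degreeOf i p)`. -/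
lemma degreeOf_linearMap_le (L : P3 →ₗ[ℝ] P3) (i : Fin 3) (φ : ℕ → ℕ) (hφ : Monotone φ)
    (h : ∀ m c, degreeOf i (L (monomial m c)) ≤ φ (m i)) (p : P3) :
    degreeOf i (L p) ≤ φ (degreeOf i p) := by
  conv_lhs => rw [← MvPolynomial.support_sum_monomial_coeff p]
  rw [map_sum]
  refine (MvPolynomial.degreeOf_sum_le _ _ _).trans ?_
  apply Finset.sup_le
  intro m hm
  exact (h m _).trans (hφ (mem_support_degreeOf i p hm))

lemma degreeOf_intX_self_le (i : Fin 3) (p : P3) :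
    degreeOf i (intX i p) ≤ degreeOf i p + 1 := by
  refine degreeOf_linearMap_le _ _ (fun n => n + 1) (fun a b h => by dsimp; omega) ?_ p
  intro m c
  rw [intX_monomial]
  refine (degreeOf_monomial_le' _ _ _).trans ?_
  simp

lemma degreeOf_intX_ne_le (i j : Fin 3) (hij : j ≠ i) (p : P3) :
    degreeOf j (intX i p) ≤ degreeOf j p := by
  refine degreeOf_linearMap_le _ _ id monotone_id ?_ p
  intro m c
  rw [intX_monomial]
  refine (degreeOf_monomial_le' _ _ _).trans ?_
  simp [Finsupp.single_apply, hij, Ne.symm hij]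

lemma degreeOf_zeroX_le (i j : Fin 3) (p : P3) :
    degreeOf j (zeroX i p) ≤ degreeOf j p := by
  refine degreeOf_linearMap_le _ _ id monotone_id ?_ p
  intro m c
  rw [zeroX_monomial]
  split_ifs with hm
  · exact degreeOf_monomial_le' _ _ _
  · simp

lemma degreeOf_zeroX_self (i : Fin 3) (p : P3) :
    degreeOf i (zeroX i p) = 0 := by
  have : degreeOf i (zeroX i p) ≤ 0 := by
    refine degreeOf_linearMap_le _ _ (fun _ => 0) monotone_const ?_ p
    intro m c
    rw [zeroX_monomial]
    split_ifs with hm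
    · exact (degreeOf_monomial_le' _ _ _).trans (by omega)
    · simp
  omega

lemma degreeOf_pderiv_le (i j : Fin 3) (p : P3) :
    degreeOf j (pderiv i p) ≤ degreeOf j p := by
  have : degreeOf j (pderivL i p) ≤ degreeOf j p := by
    refine degreeOf_linearMap_le _ _ id monotone_id ?_ p
    intro m c
    rw [pderivL_apply, pderiv_monomial]
    refine (degreeOf_monomial_le' _ _ _).trans ?_
    simp only [Finsupp.tsub_apply, id]
    exact Nat.sub_le _ _
  simpa [pderivL_apply] using this

lemma degreeOf_pderiv_self_le (i : Fin 3) (p : P3) :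
    degreeOf i (pderiv i p) ≤ degreeOf i p - 1 := by
  have : degreeOf i (pderivL i p) ≤ degreeOf i p - 1 := by
    refine degreeOf_linearMap_le _ _ (fun n => n - 1) (fun a b h => by dsimp; omega) ?_ p
    intro m c
    rw [pderivL_apply, pderiv_monomial]
    rcases Nat.eq_zero_or_pos (m i) with hm | hm
    · rw [hm]; simp
    · refine (degreeOf_monomial_le' _ _ _).trans ?_
      simp [Finsupp.tsub_apply]
  simpa [pderivL_apply] using this

end DegreeBounds

end PolyCalc

section AnalysisHelpers
open MvPolynomial

lemma clm_ext3 {A B : V3 →L[ℝ] ℝ}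
    (h : ∀ j, A (Pi.single j 1) = B (Pi.single j 1)) : A = B := by
  ext ξ
  have hξ : (ξ : V3) = ∑ j, ξ j • (Pi.single j 1 : V3) := by
    funext k
    simp [Finset.sum_apply, Pi.single_apply]
  rw [hξ, map_sum, map_sum]
  exact Finset.sum_congr rfl fun j _ => by rw [A.map_smul, B.map_smul, h j]

/-- The derivative of the evaluation map of a polynomial. -/
def evalD (q : MvPolynomial (Fin 3) ℝ) (x : V3) : V3 →L[ℝ] ℝ :=
  ∑ j, (eval x (pderiv j q)) • (ContinuousLinearMap.proj j : V3 →L[ℝ] ℝ)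

lemma evalD_apply_single (q : MvPolynomial (Fin 3) ℝ) (x : V3) (i : Fin 3) :
    evalD q x (Pi.single i 1) = eval x (pderiv i q) := by
  simp only [evalD, ContinuousLinearMap.sum_apply, ContinuousLinearMap.smul_apply,
    ContinuousLinearMap.proj_apply, Pi.single_apply, smul_eq_mul]
  rw [Finset.sum_congr rfl (fun j _ => by
    rw [show (eval x (pderiv j q)) * (if j = i then (1:ℝ) else 0)
        = if j = i then eval x (pderiv j q) else 0 by split_ifs <;> simp])]
  simp

lemma hasFDerivAt_eval (q : MvPolynomial (Fin 3) ℝ) (x : V3) :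
    HasFDerivAt (fun y : V3 => eval y q) (evalD q x) x := by
  induction q using MvPolynomial.induction_on with
  | C a =>
    have h1 : evalD (C a) x = 0 := by simp [evalD, pderiv_C]
    have h2 : (fun y : V3 => eval y (C a)) = fun _ => a := by funext y; simp
    rw [h1, h2]
    exact hasFDerivAt_const a x
  | add p q hp hq =>
    have h1 : evalD (p + q) x = evalD p x + evalD q x := by
      simp [evalD, add_smul, Finset.sum_add_distrib]
    have h2 : (fun y : V3 => eval y (p + q)) = fun y => eval y p + eval y q := by
      funext y; simp
    rw [h1, h2]
    exact hp.add hq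
  | mul_X p n hp =>
    have hX : HasFDerivAt (fun y : V3 => y n)
        (ContinuousLinearMap.proj n : V3 →L[ℝ] ℝ) x :=
      (ContinuousLinearMap.proj n : V3 →L[ℝ] ℝ).hasFDerivAt
    have h2 : (fun y : V3 => eval y (p * X n)) = fun y => eval y p * y n := by
      funext y; simp
    have h1 : evalD (p * X n) x
        = eval x p • (ContinuousLinearMap.proj n : V3 →L[ℝ] ℝ) + x n • evalD p x := by
      apply clm_ext3
      intro k
      rw [evalD_apply_single]
      simp only [ContinuousLinearMap.add_apply, ContinuousLinearMap.smul_apply,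
        ContinuousLinearMap.proj_apply, evalD_apply_single, smul_eq_mul, Pi.single_apply]
      rw [pderiv_mul, eval_add, eval_mul, eval_mul, eval_X, pderiv_X]
      by_cases hk : k = n
      · subst hk; simp; ring
      · simp [hk, Ne.symm hk, Pi.single_apply]; ring
    rw [h1, h2]
    exact hp.mul hX

lemma differentiableAt_eval (q : MvPolynomial (Fin 3) ℝ) (x : V3) :
    DifferentiableAt ℝ (fun y : V3 => eval y q) x :=
  (hasFDerivAt_eval q x).differentiableAt

lemma pd_eval (i : Fin 3) (q : MvPolynomial (Fin 3) ℝ) (x : V3) :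
    pd i (fun y : V3 => eval y q) x = eval x (pderiv i q) := by
  rw [pd, (hasFDerivAt_eval q x).fderiv, evalD_apply_single]

lemma fderiv_eq_sum_pd {f : V3 → ℝ} {x : V3} (hf : DifferentiableAt ℝ f x) :
    fderiv ℝ f x = ∑ j, pd j f x • (ContinuousLinearMap.proj j : V3 →L[ℝ] ℝ) := by
  apply clm_ext3
  intro j
  simp only [ContinuousLinearMap.sum_apply, ContinuousLinearMap.smul_apply,
    ContinuousLinearMap.proj_apply, Pi.single_apply, smul_eq_mul]
  rw [Finset.sum_congr rfl (fun j' _ => by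
    rw [show (pd j' f x) * (if j' = j then (1:ℝ) else 0)
        = if j' = j then pd j' f x else 0 by split_ifs <;> simp])]
  simp [pd]

lemma pd_congr_nhds {f g : V3 → ℝ} {x : V3} (h : f =ᶠ[nhds x] g) (i : Fin 3) :
    pd i f x = pd i g x := by
  rw [pd, pd, Filter.EventuallyEq.fderiv_eq h]

/-- Mixed second partial derivatives of a `C²` function on an open set commute. -/
lemma pd_comm {f : V3 → ℝ} {Ω : Set V3} (hΩ : IsOpen Ω) (hf : ContDiffOn ℝ 2 f Ω)
    {x : V3} (hx : x ∈ Ω) (i j : Fin 3) :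
    pd i (pd j f) x = pd j (pd i f) x := by
  have hca : ContDiffAt ℝ 2 f x := (hf x hx).contDiffAt (hΩ.mem_nhds hx)
  have hsymm : IsSymmSndFDerivAt ℝ f x := hca.isSymmSndFDerivAt (by simp)
  have hder : DifferentiableAt ℝ (fderiv ℝ f) x := by
    have := hca.fderiv_right (m := 1) (by norm_num)
    exact this.differentiableAt one_ne_zero
  have key : ∀ a b : Fin 3, pd a (pd b f) x
      = fderiv ℝ (fderiv ℝ f) x (Pi.single a 1) (Pi.single b 1) := by
    intro a b
    have h1 : pd b f = fun y => (fderiv ℝ f y) ((fun _ : V3 => (Pi.single b 1 : V3)) y) := rfl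
    rw [pd, h1, fderiv_clm_apply hder (differentiableAt_const _)]
    simp [ContinuousLinearMap.flip_apply]
  rw [key i j, key j i, hsymm.eq]

/-- A `C²` function has differentiable partial derivatives. -/
lemma pd_differentiableAt {f : V3 → ℝ} {Ω : Set V3} (hΩ : IsOpen Ω)
    (hf : ContDiffOn ℝ 2 f Ω) {x : V3} (hx : x ∈ Ω) (j : Fin 3) :
    DifferentiableAt ℝ (pd j f) x := by
  have hca : ContDiffAt ℝ 2 f x := (hf x hx).contDiffAt (hΩ.mem_nhds hx)
  have hder : DifferentiableAt ℝ (fderiv ℝ f) x := by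
    have := hca.fderiv_right (m := 1) (by norm_num)
    exact this.differentiableAt one_ne_zero
  exact hder.clm_apply (differentiableAt_const _)

end AnalysisHelpers

open MvPolynomial

/-- If `v ∈ C²(Ω;ℝ³)` on a connected open `Ω` and `u = dev grad v` agrees on `Ω`
with a polynomial matrix lying in the cuboid shape space `U_{[k]}(Ω;𝕋)`
(diagonal entries in `Q_{k-1}`, off-diagonal `u_ij` of degree `≤ k` in `x_i`,
`≤ k−2` in `x_j`, `≤ k−1` in `x_l`), then `div v` agrees on `Ω` with a polynomial
in `Q_{k-1}(Ω;ℝ)`. -/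
theorem div_v_in_Q (k : ℕ) (hk : 2 ≤ k)
    (Ω : Set V3) (hΩ : IsOpen Ω) (hconn : IsConnected Ω)
    (v : V3 → V3) (hv : ∀ i, ContDiffOn ℝ 2 (fun x => v x i) Ω)
    (p : Fin 3 → Fin 3 → MvPolynomial (Fin 3) ℝ)
    (hdiag : ∀ i j : Fin 3, (p i i).degreeOf j ≤ k - 1)
    (hoff : ∀ i j l : Fin 3, i ≠ j → j ≠ l → i ≠ l →
      (p i j).degreeOf i ≤ k ∧ (p i j).degreeOf j ≤ k - 2 ∧ (p i j).degreeOf l ≤ k - 1)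
    (hu : ∀ x ∈ Ω, ∀ i j, devM (gradM v x) i j = eval x (p i j)) :
    ∃ q : MvPolynomial (Fin 3) ℝ, (∀ i, q.degreeOf i ≤ k - 1) ∧
      ∀ x ∈ Ω, divVec v x = eval x q := by
  classical
  obtain ⟨x₀, hx₀⟩ := hconn.nonempty
  set d : V3 → ℝ := divVec v with hd
  -- differentiability of partial derivatives of v
  have hdiffw : ∀ (i j : Fin 3) (x : V3), x ∈ Ω →
      DifferentiableAt ℝ (pd j (fun y => v y i)) x :=
    fun i j x hx => pd_differentiableAt hΩ (hv i) hx j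
  have hdfun : d = fun y => ∑ i, pd i (fun y' => v y' i) y := rfl
  have hdiffd : ∀ x ∈ Ω, DifferentiableAt ℝ d x := by
    intro x hx
    rw [hdfun]
    exact DifferentiableAt.fun_sum fun i _ => hdiffw i i x hx
  -- off-diagonal entries
  have hoffd : ∀ x ∈ Ω, ∀ i j : Fin 3, i ≠ j →
      pd j (fun y => v y i) x = eval x (p i j) := by
    intro x hx i j hij
    have h := hu x hx i j
    simpa [devM, Matrix.sub_apply, Matrix.smul_apply, Matrix.one_apply_ne hij,
      gradM, Matrix.of_apply] using h
  -- trace of gradM is the divergence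
  have htr : ∀ x : V3, Matrix.trace (gradM v x) = d x := by
    intro x
    simp [Matrix.trace, Matrix.diag, gradM, divVec, hd, Matrix.of_apply]
  -- diagonal entries
  have hdiagd : ∀ x ∈ Ω, ∀ i : Fin 3,
      pd i (fun y => v y i) x = eval x (p i i) + d x * (3:ℝ)⁻¹ := by
    intro x hx i
    have h := hu x hx i i
    rw [devM, Matrix.sub_apply, Matrix.smul_apply, Matrix.one_apply_eq, htr] at h
    have h2 : gradM v x i i = pd i (fun y => v y i) x := rfl
    rw [h2] at h
    have : pd i (fun y => v y i) x - d x / 3 * 1 = eval x (p i i) := h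
    field_simp at this ⊢
    linarith
  -- the gradient polynomials
  set g : Fin 3 → MvPolynomial (Fin 3) ℝ :=
    fun j => MvPolynomial.C (3/2 : ℝ) * ∑ i, pderiv i (p i j) with hg
  -- key: the partial derivatives of d agree with g on Ω
  have key : ∀ x ∈ Ω, ∀ j : Fin 3, pd j d x = eval x (g j) := by
    intro x hx j
    have step1 : pd j d x = ∑ i, pd j (pd i (fun y => v y i)) x := by
      rw [hdfun, pd, fderiv_fun_sum fun i _ => hdiffw i i x hx]
      simp [ContinuousLinearMap.sum_apply, pd]
    have step2 : ∀ i : Fin 3, pd j (pd i (fun y => v y i)) x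
        = pd i (pd j (fun y => v y i)) x :=
      fun i => pd_comm hΩ (hv i) hx j i
    have hnhds : Ω ∈ nhds x := hΩ.mem_nhds hx
    have step3 : ∀ i : Fin 3, i ≠ j → pd i (pd j (fun y => v y i)) x
        = eval x (pderiv i (p i j)) := by
      intro i hij
      have hev : pd j (fun y => v y i) =ᶠ[nhds x] (fun y => eval y (p i j)) := by
        filter_upwards [hnhds] with y hy
        exact hoffd y hy i j hij
      rw [pd_congr_nhds hev, pd_eval]
    have step4 : pd j (pd j (fun y => v y j)) x
        = eval x (pderiv j (p j j)) + pd j d x * (3:ℝ)⁻¹ := by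
      have hev : pd j (fun y => v y j) =ᶠ[nhds x]
          (fun y => eval y (p j j) + d y * (3:ℝ)⁻¹) := by
        filter_upwards [hnhds] with y hy
        exact hdiagd y hy j
      rw [pd_congr_nhds hev]
      have h1 : DifferentiableAt ℝ (fun y : V3 => eval y (p j j)) x :=
        differentiableAt_eval _ x
      have h2 : DifferentiableAt ℝ (fun y : V3 => d y * (3:ℝ)⁻¹) x :=
        (hdiffd x hx).mul_const _
      rw [pd, fderiv_fun_add h1 h2, ContinuousLinearMap.add_apply,
        fderiv_mul_const (hdiffd x hx), ← pd, pd_eval]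
      simp [pd, mul_comm]
    have hsum : pd j d x = (∑ i, eval x (pderiv i (p i j))) + pd j d x * (3:ℝ)⁻¹ := by
      have hterm : ∀ i : Fin 3, pd i (pd j (fun y => v y i)) x
          = eval x (pderiv i (p i j)) + (if i = j then pd j d x * (3:ℝ)⁻¹ else 0) := by
        intro i
        by_cases hij : i = j
        · subst hij; rw [step4]; simp
        · rw [step3 i hij]; simp [hij]
      calc pd j d x = ∑ i, pd j (pd i (fun y => v y i)) x := step1
        _ = ∑ i, (eval x (pderiv i (p i j)) + if i = j then pd j d x * (3:ℝ)⁻¹ else 0) :=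
            Finset.sum_congr rfl fun i _ => (step2 i).trans (hterm i)
        _ = (∑ i, eval x (pderiv i (p i j))) + pd j d x * (3:ℝ)⁻¹ := by
            rw [Finset.sum_add_distrib,
              Finset.sum_ite_eq' Finset.univ j (fun _ => pd j d x * (3:ℝ)⁻¹)]
            simp
    have hevalg : eval x (g j) = (3/2 : ℝ) * ∑ i, eval x (pderiv i (p i j)) := by
      rw [hg]
      simp [eval_mul, eval_C, map_sum]
    rw [hevalg]
    linarith [hsum]
  -- symmetry of the mixed derivatives of g, as polynomials
  have gsymm : ∀ i j : Fin 3, pderiv i (g j) = pderiv j (g i) := by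
    intro i j
    apply MvPolynomial.funext
    intro x
    -- first on Ω via symmetry of second derivatives of d
    have hΩeq : ∀ y ∈ Ω, eval y (pderiv i (g j)) = eval y (pderiv j (g i)) := by
      intro y hy
      set G : V3 → (V3 →L[ℝ] ℝ) :=
        fun z => ∑ j', (eval z (g j')) • (ContinuousLinearMap.proj j' : V3 →L[ℝ] ℝ)
        with hG
      have hev : ∀ᶠ z in nhds y, HasFDerivAt d (G z) z := by
        filter_upwards [hΩ.mem_nhds hy] with z hz
        have hdz := hdiffd z hz
        have hfd : fderiv ℝ d z = G z := by
          rw [fderiv_eq_sum_pd hdz, hG]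
          exact Finset.sum_congr rfl fun j' _ => by rw [key z hz j']
        rw [← hfd]
        exact hdz.hasFDerivAt
      have hGd : HasFDerivAt G
          (∑ j', (evalD (g j') y).smulRight (ContinuousLinearMap.proj j' : V3 →L[ℝ] ℝ)) y :=
        HasFDerivAt.fun_sum fun j' _ => (hasFDerivAt_eval (g j') y).smul_const (ContinuousLinearMap.proj j' : V3 →L[ℝ] ℝ)
      have hsym := second_derivative_symmetric_of_eventually hev hGd
        (Pi.single i 1) (Pi.single j 1)
      have happ : ∀ a b : Fin 3,
          (∑ j', (evalD (g j') y).smulRight (ContinuousLinearMap.proj j' : V3 →L[ℝ] ℝ))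
            (Pi.single a 1) (Pi.single b 1) = eval y (pderiv a (g b)) := by
        intro a b
        simp only [ContinuousLinearMap.sum_apply, ContinuousLinearMap.smulRight_apply,
          ContinuousLinearMap.proj_apply, evalD_apply_single, smul_eq_mul, Pi.single_apply,
          mul_ite, mul_one, mul_zero]
        simp [Pi.single_apply, mul_ite, Finset.sum_ite_eq']
      rw [happ i j, happ j i] at hsym
      exact hsym
    -- then everywhere by analyticity
    set F : V3 → ℝ := fun z => eval z (pderiv i (g j)) - eval z (pderiv j (g i)) with hF
    have hFa : AnalyticOnNhd ℝ F Set.univ :=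
      (AnalyticOnNhd.eval_mvPolynomial (pderiv i (g j))).sub
        (AnalyticOnNhd.eval_mvPolynomial (pderiv j (g i)))
    have hzero : Set.EqOn F 0 Set.univ := by
      apply hFa.eqOn_zero_of_preconnected_of_eventuallyEq_zero isPreconnected_univ
        (Set.mem_univ x₀)
      filter_upwards [hΩ.mem_nhds hx₀] with z hz
      simp [hF, hΩeq z hz]
    have := hzero (Set.mem_univ x)
    simp only [hF, Pi.zero_apply] at this
    linarith
  -- the potential
  set Qp : MvPolynomial (Fin 3) ℝ :=
    intX 0 (g 0) + intX 1 (zeroX 0 (g 1)) + intX 2 (zeroX 0 (zeroX 1 (g 2))) with hQp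
  have h01 : (0 : Fin 3) ≠ 1 := by decide
  have h02 : (0 : Fin 3) ≠ 2 := by decide
  have h12 : (1 : Fin 3) ≠ 2 := by decide
  have hQd0 : pderiv (0 : Fin 3) Qp = g 0 := by
    rw [hQp, map_add, map_add, pderiv_intX_self,
        pderiv_intX_comm 1 0 h01, pderiv_zeroX_self, map_zero,
        pderiv_intX_comm 2 0 h02, pderiv_zeroX_self, map_zero]
    abel
  have hQd1 : pderiv (1 : Fin 3) Qp = g 1 := by
    rw [hQp, map_add, map_add,
        pderiv_intX_comm 0 1 h01.symm, gsymm 1 0, intX_pderiv_self,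
        pderiv_intX_self,
        pderiv_intX_comm 2 1 h12, pderiv_zeroX_comm 0 1 h01.symm,
        pderiv_zeroX_self, map_zero, map_zero]
    abel
  have hQd2 : pderiv (2 : Fin 3) Qp = g 2 := by
    rw [hQp, map_add, map_add,
        pderiv_intX_comm 0 2 h02.symm, gsymm 2 0, intX_pderiv_self,
        pderiv_intX_comm 1 2 h12.symm, pderiv_zeroX_comm 0 2 h02.symm,
        gsymm 2 1, intX_zeroX_comm 1 0 h01.symm, intX_pderiv_self,
        map_sub, pderiv_intX_self]
    abel
  have hQd : ∀ j : Fin 3, pderiv j Qp = g j := by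
    intro j
    fin_cases j
    · exact hQd0
    · exact hQd1
    · exact hQd2
  -- degree bounds on g
  have hcover : ∀ i j l' l : Fin 3, i ≠ j → j ≠ l' → i ≠ l' → l = i ∨ l = j ∨ l = l' := by
    decide
  have hthird : ∀ i j : Fin 3, i ≠ j → ∃ l, j ≠ l ∧ i ≠ l := by decide
  have hgdeg1 : ∀ j l : Fin 3, degreeOf l (g j) ≤ k - 1 := by
    intro j l
    rw [hg]
    refine (MvPolynomial.degreeOf_C_mul_le _ _ _).trans ?_
    refine (MvPolynomial.degreeOf_sum_le _ _ _).trans ?_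
    apply Finset.sup_le
    intro i _
    by_cases hij : i = j
    · subst hij
      exact (degreeOf_pderiv_le i l _).trans (hdiag i l)
    · obtain ⟨l', hjl', hil'⟩ := hthird i j hij
      obtain ⟨hbi, hbj, hbl'⟩ := hoff i j l' hij hjl' hil'
      rcases hcover i j l' l hij hjl' hil' with rfl | rfl | rfl
      · refine (degreeOf_pderiv_self_le l _).trans ?_
        omega
      · exact (degreeOf_pderiv_le i l _).trans (by omega)
      · exact (degreeOf_pderiv_le i l _).trans hbl'
  have hgdegj : ∀ j : Fin 3, degreeOf j (g j) ≤ k - 2 := by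
    intro j
    rw [hg]
    refine (MvPolynomial.degreeOf_C_mul_le _ _ _).trans ?_
    refine (MvPolynomial.degreeOf_sum_le _ _ _).trans ?_
    apply Finset.sup_le
    intro i _
    by_cases hij : i = j
    · subst hij
      refine (degreeOf_pderiv_self_le i _).trans ?_
      have := hdiag i i
      omega
    · obtain ⟨l', hjl', hil'⟩ := hthird i j hij
      obtain ⟨hbi, hbj, hbl'⟩ := hoff i j l' hij hjl' hil'
      exact (degreeOf_pderiv_le i j _).trans hbj
  -- degree bounds on Qp
  have hQdeg : ∀ l : Fin 3, degreeOf l Qp ≤ k - 1 := by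
    intro l
    rw [hQp]
    refine (MvPolynomial.degreeOf_add_le _ _ _).trans ?_
    apply max_le
    · refine (MvPolynomial.degreeOf_add_le _ _ _).trans ?_
      apply max_le
      · by_cases hl : l = 0
        · subst hl
          refine (degreeOf_intX_self_le 0 _).trans ?_
          have := hgdegj 0
          omega
        · exact (degreeOf_intX_ne_le 0 l hl _).trans (hgdeg1 0 l)
      · by_cases hl : l = 1
        · subst hl
          refine (degreeOf_intX_self_le 1 _).trans ?_
          have h1 := (degreeOf_zeroX_le 0 1 (g 1)).trans (hgdegj 1)
          omega
        · refine (degreeOf_intX_ne_le 1 l hl _).trans ?_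
          exact (degreeOf_zeroX_le 0 l (g 1)).trans (hgdeg1 1 l)
    · by_cases hl : l = 2
      · subst hl
        refine (degreeOf_intX_self_le 2 _).trans ?_
        have h1 := (degreeOf_zeroX_le 0 2 _).trans
          ((degreeOf_zeroX_le 1 2 (g 2)).trans (hgdegj 2))
        omega
      · refine (degreeOf_intX_ne_le 2 l hl _).trans ?_
        exact (degreeOf_zeroX_le 0 l _).trans
          ((degreeOf_zeroX_le 1 l (g 2)).trans (hgdeg1 2 l))
  -- d - eval Qp is locally constant on Ω
  set h : V3 → ℝ := fun z => d z - eval z Qp with hh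
  have hdiffh : ∀ y ∈ Ω, DifferentiableAt ℝ h y :=
    fun y hy => (hdiffd y hy).sub (differentiableAt_eval Qp y)
  have hfz : ∀ y ∈ Ω, fderiv ℝ h y = 0 := by
    intro y hy
    rw [fderiv_eq_sum_pd (hdiffh y hy)]
    have hpdh : ∀ j : Fin 3, pd j h y = 0 := by
      intro j
      have : pd j h y = pd j d y - pd j (fun z => eval z Qp) y := by
        rw [pd, pd, pd, hh, fderiv_fun_sub (hdiffd y hy) (differentiableAt_eval Qp y)]
        simp
      rw [this, pd_eval, hQd j, key y hy j, sub_self]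
    simp [hpdh]
  have hloc : ∀ y ∈ Ω, ∀ᶠ z in nhds y, h z = h y := by
    intro y hy
    obtain ⟨ε, hε, hball⟩ := Metric.isOpen_iff.mp hΩ y hy
    filter_upwards [Metric.ball_mem_nhds y hε] with z hz
    refine Convex.is_const_of_fderivWithin_eq_zero (convex_ball y ε)
      (fun w hw => (hdiffh w (hball hw)).differentiableWithinAt) ?_ hz
      (Metric.mem_ball_self hε)
    intro w hw
    rw [fderivWithin_of_isOpen Metric.isOpen_ball hw]
    exact hfz w (hball hw)
  have hconst : ∀ y ∈ Ω, h y = h x₀ := by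
    by_contra hcon
    push_neg at hcon
    obtain ⟨y₁, hy₁, hy₁ne⟩ := hcon
    set A : Set V3 := {y | y ∈ Ω ∧ h y = h x₀} with hA
    set B : Set V3 := {y | y ∈ Ω ∧ h y ≠ h x₀} with hB
    have hAopen : IsOpen A := by
      rw [isOpen_iff_mem_nhds]
      intro y hy
      filter_upwards [hloc y hy.1, hΩ.mem_nhds hy.1] with z h1 h2
      exact ⟨h2, h1.trans hy.2⟩
    have hBopen : IsOpen B := by
      rw [isOpen_iff_mem_nhds]
      intro y hy
      filter_upwards [hloc y hy.1, hΩ.mem_nhds hy.1] with z h1 h2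
      exact ⟨h2, h1.symm ▸ hy.2⟩
    obtain ⟨z, hzΩ, hzA, hzB⟩ := hconn.isPreconnected A B hAopen hBopen
      (fun y hy => by
        by_cases hcase : h y = h x₀
        · exact Or.inl ⟨hy, hcase⟩
        · exact Or.inr ⟨hy, hcase⟩)
      ⟨x₀, hx₀, hx₀, rfl⟩ ⟨y₁, hy₁, hy₁, hy₁ne⟩
    exact hzB.2 hzA.2
  -- conclusion
  refine ⟨Qp + MvPolynomial.C (h x₀), ?_, ?_⟩
  · intro l
    refine (MvPolynomial.degreeOf_add_le _ _ _).trans ?_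
    apply max_le (hQdeg l)
    rw [MvPolynomial.degreeOf_C]
    omega
  · intro x hx
    rw [eval_add, eval_C]
    have := hconst x hx
    rw [hh] at this
    simp only at this
    have hdx : d x - eval x Qp = h x₀ := this
    show d x = eval x Qp + h x₀
    linarith


end
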